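/- Let (S,K,I) be a split graph with ⋃_{v∈I} N_S(v) = K, |K| equal to the clique number of S, and |I| equal to the independence number of S with |I| ≥ 2. Suppose σ_{uv}(S) = 1 for all distinct u,v ∈ I (i.e., Φ(S) is simple and complete), and let U be the set of universal vertices of S. Then all vertices of I have a common degree d in S with 1 ≤ d ≤ |K| − 1, |U| ∈ {d − 1, d + 1 − |I|}, and |K| = |I| + |U| (in particular |K| ≥ |I|). Moreover, |U| = d − 1 iff |K| = |I| + d − 1, and |U| = d + 1 − |I| iff |K| = d + 1. -/

import Mathlib

open SimpleGraph

/-- `T` is a 4-element vertex subset of `S` whose induced subgraph is a path on 4 vertices. -/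
def IsInducedP4 {V : Type*} (S : SimpleGraph V) (T : Finset V) : Prop :=
  T.card = 4 ∧ Nonempty (S.induce (T : Set V) ≃g pathGraph 4)

/-- `σ_{uv}(S)`: the number of induced `P4`'s of `S` containing both `u` and `v`. -/
noncomputable def sigmaP4 {V : Type*} (S : SimpleGraph V) (u v : V) : ℕ :=
  Nat.card {T : Finset V // IsInducedP4 S T ∧ u ∈ T ∧ v ∈ T}

/-!
If `u, v ∈ I`, the induced `P4`'s through `u` and `v` are the paths `u - p - q - v` with
`p ∈ N(u) \ N(v)` and `q ∈ N(v) \ N(u)`, so `σ_uv = 1` forces `|N(u) \ N(v)| = 1`.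
A family of sets whose pairwise differences all have one element is either a sunflower with
singleton petals around the intersection `M` of two of its members, or each member is the union `J`
of two members minus one point. Since `U = ⋂ N(v)` and `K = ⋃ N(v)`, counting petals (resp.
missing points) gives `|K| = |U| + |I|`, with `|U| = d - 1` in the first case and `|K| = d + 1` in
the second.
-/

open Finset

namespace Finset

theorem eq_singleton_of_mem_of_card_eq_one {α : Type*} {s : Finset α} {a : α} (h : #s = 1)
    (ha : a ∈ s) : s = {a} :=
  eq_singleton_iff_unique_mem.mpr ⟨ha, fun b hb => card_le_one.mp h.le b hb a ha⟩

variable {ι α : Type*} [DecidableEq α]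

theorem eq_of_sdiff_eq_sdiff {s t u : Finset α} (h₁ : s \ u = t \ u) (h₂ : u \ s = u \ t) :
    s = t := by
  rw [← sdiff_union_inter s u, ← sdiff_union_inter t u, h₁, inter_comm s, inter_comm t,
    ← sdiff_sdiff_self_left, h₂, sdiff_sdiff_self_left]

theorem card_biUnion_of_card_eq_one {s : Finset ι} {G : ι → Finset α}
    (hG : ∀ i ∈ s, #(G i) = 1) (hinj : Set.InjOn G s) : #(s.biUnion G) = #s := by
  rw [card_biUnion, sum_congr rfl hG, sum_const, smul_eq_mul, mul_one]
  intro i hi j hj hij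
  obtain ⟨x, hx⟩ := card_eq_one.mp (hG i hi)
  obtain ⟨y, hy⟩ := card_eq_one.mp (hG j hj)
  rw [Function.onFun, hx, hy, disjoint_singleton]
  rintro rfl
  exact hij (hinj hi hj (hx.trans hy.symm))

theorem biUnion_eq_union_of_forall_subset_union {s : Finset ι} {F : ι → Finset α} {a b : ι}
    (ha : a ∈ s) (hb : b ∈ s) (hbound : ∀ i ∈ s, F i ⊆ F a ∪ F b) : s.biUnion F = F a ∪ F b :=
  (biUnion_subset.mpr hbound).antisymm
    (union_subset (subset_biUnion_of_mem F ha) (subset_biUnion_of_mem F hb))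

theorem inf_eq_inter_of_forall_inter_subset [Fintype α] {s : Finset ι} {F : ι → Finset α}
    {a b : ι} (ha : a ∈ s) (hb : b ∈ s) (hcore : ∀ i ∈ s, F a ∩ F b ⊆ F i) :
    s.inf F = F a ∩ F b :=
  (subset_inter (inf_le ha) (inf_le hb)).antisymm (Finset.le_inf hcore)

theorem _root_.Set.InjOn.card_biUnion_eq_card_add_card {s : Finset ι} {F : ι → Finset α}
    {M : Finset α} (hinj : Set.InjOn F s) (hs : s.Nonempty) (hM : ∀ i ∈ s, M ⊆ F i)
    (hcard : ∀ i ∈ s, #(F i) = #M + 1) : #(s.biUnion F) = #M + #s := by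
  obtain ⟨a, ha⟩ := hs
  have hpetal : ∀ i ∈ s, #(F i \ M) = 1 := fun i hi => by
    rw [card_sdiff_of_subset (hM i hi), hcard i hi, Nat.add_sub_cancel_left]
  have hinj' : Set.InjOn (fun i => F i \ M) s := fun i hi j hj hij => hinj hi hj <|
    eq_of_sdiff_eq_sdiff hij <| by
      rw [sdiff_eq_empty_iff_subset.mpr (hM i hi), sdiff_eq_empty_iff_subset.mpr (hM j hj)]
  rw [← card_sdiff_add_card_eq_card ((hM a ha).trans (subset_biUnion_of_mem F ha)), add_comm,
    ← card_biUnion_of_card_eq_one hpetal hinj', ← sup_eq_biUnion, ← sup_eq_biUnion,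
    sup_sdiff_right]

theorem _root_.Set.InjOn.card_eq_card_inf_add_card [Fintype α] {s : Finset ι}
    {F : ι → Finset α} {J : Finset α} (hinj : Set.InjOn F s) (hs : s.Nonempty)
    (hJ : ∀ i ∈ s, F i ⊆ J) (hcard : ∀ i ∈ s, #J = #(F i) + 1) : #J = #(s.inf F) + #s := by
  obtain ⟨a, ha⟩ := hs
  have hcopetal : ∀ i ∈ s, #(J \ F i) = 1 := fun i hi => by
    rw [card_sdiff_of_subset (hJ i hi), hcard i hi, Nat.add_sub_cancel_left]
  have hinj' : Set.InjOn (fun i => J \ F i) s := fun i hi j hj hij => hinj hi hj <|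
    eq_of_sdiff_eq_sdiff (by
      rw [sdiff_eq_empty_iff_subset.mpr (hJ i hi), sdiff_eq_empty_iff_subset.mpr (hJ j hj)]) hij
  rw [← card_sdiff_add_card_eq_card ((inf_le ha).trans (hJ a ha)), add_comm,
    ← sup_sdiff_left, sup_eq_biUnion, card_biUnion_of_card_eq_one hcopetal hinj']

section PairwiseCardSdiffEqOne

variable {s : Finset ι} {F : ι → Finset α}

theorem card_eq_card_of_pairwise_card_sdiff_eq_one
    (hF : (s : Set ι).Pairwise fun i j => #(F i \ F j) = 1) {i j : ι} (hi : i ∈ s) (hj : j ∈ s) :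
    #(F i) = #(F j) := by
  rcases eq_or_ne i j with rfl | hij
  · rfl
  · exact card_sdiff_eq_card_sdiff_iff.mp ((hF hi hj hij).trans (hF hj hi hij.symm).symm)

theorem injOn_of_pairwise_card_sdiff_eq_one
    (hF : (s : Set ι).Pairwise fun i j => #(F i \ F j) = 1) : Set.InjOn F s := by
  intro i hi j hj hFij
  by_contra hij
  simpa [hFij] using hF hi hj hij

theorem inter_subset_or_subset_union_of_pairwise_card_sdiff_eq_one
    (hF : (s : Set ι).Pairwise fun i j => #(F i \ F j) = 1) {a b i : ι} (ha : a ∈ s) (hb : b ∈ s)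
    (hab : a ≠ b) (hi : i ∈ s) : F a ∩ F b ⊆ F i ∨ F i ⊆ F a ∪ F b := by
  by_contra! h
  obtain ⟨m, hm, hmi⟩ := not_subset.mp h.1
  obtain ⟨y, hyi, hy⟩ := not_subset.mp h.2
  rw [mem_inter] at hm
  rw [mem_union, not_or] at hy
  have hia : i ≠ a := by rintro rfl; exact hy.1 hyi
  have hib : i ≠ b := by rintro rfl; exact hy.2 hyi
  have hma : F a \ F i = {m} :=
    eq_singleton_of_mem_of_card_eq_one (hF ha hi hia.symm) (mem_sdiff.mpr ⟨hm.1, hmi⟩)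
  have hmb : F b \ F i = {m} :=
    eq_singleton_of_mem_of_card_eq_one (hF hb hi hib.symm) (mem_sdiff.mpr ⟨hm.2, hmi⟩)
  have hya : F i \ F a = {y} :=
    eq_singleton_of_mem_of_card_eq_one (hF hi ha hia) (mem_sdiff.mpr ⟨hyi, hy.1⟩)
  have hyb : F i \ F b = {y} :=
    eq_singleton_of_mem_of_card_eq_one (hF hi hb hib) (mem_sdiff.mpr ⟨hyi, hy.2⟩)
  exact hab (injOn_of_pairwise_card_sdiff_eq_one hF ha hb
    (eq_of_sdiff_eq_sdiff (hma.trans hmb.symm) (hya.trans hyb.symm)))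

theorem forall_inter_subset_or_forall_subset_union_of_pairwise_card_sdiff_eq_one
    (hF : (s : Set ι).Pairwise fun i j => #(F i \ F j) = 1) {a b : ι} (ha : a ∈ s) (hb : b ∈ s)
    (hab : a ≠ b) : (∀ i ∈ s, F a ∩ F b ⊆ F i) ∨ (∀ i ∈ s, F i ⊆ F a ∪ F b) := by
  by_contra! h
  obtain ⟨⟨i, hi, hMi⟩, ⟨j, hj, hjJ⟩⟩ := h
  have hiJ := (inter_subset_or_subset_union_of_pairwise_card_sdiff_eq_one hF ha hb hab hi
    ).resolve_left hMi
  have hMj := (inter_subset_or_subset_union_of_pairwise_card_sdiff_eq_one hF ha hb hab hj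
    ).resolve_right hjJ
  have hji : j ≠ i := by rintro rfl; exact hMi hMj
  -- `F j \ F i` would contain a point `m ∈ F a ∩ F b` and a point `y ∉ F a ∪ F b`
  obtain ⟨m, hm, hmi⟩ := not_subset.mp hMi
  obtain ⟨y, hyj, hyJ⟩ := not_subset.mp hjJ
  have hmy : m = y := card_le_one.mp (hF hj hi hji).le m (mem_sdiff.mpr ⟨hMj hm, hmi⟩) y
    (mem_sdiff.mpr ⟨hyj, fun hyi => hyJ (hiJ hyi)⟩)
  exact hyJ (hmy ▸ mem_union_left _ (mem_inter.mp hm).1)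

theorem card_biUnion_eq_card_inf_add_card_of_pairwise_card_sdiff_eq_one [Fintype α]
    (hF : (s : Set ι).Pairwise fun i j => #(F i \ F j) = 1) {a b : ι} (ha : a ∈ s) (hb : b ∈ s)
    (hab : a ≠ b) : #(s.biUnion F) = #(s.inf F) + #s := by
  have hinj := injOn_of_pairwise_card_sdiff_eq_one hF
  have hcard := fun {i} (hi : i ∈ s) => card_eq_card_of_pairwise_card_sdiff_eq_one hF hi ha
  rcases forall_inter_subset_or_forall_subset_union_of_pairwise_card_sdiff_eq_one hF ha hb hab
    with hcore | hbound
  · have hinter : #(F a) = #(F a ∩ F b) + 1 := by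
      rw [← card_sdiff_add_card_inter (F a) (F b), hF ha hb hab, add_comm]
    rw [inf_eq_inter_of_forall_inter_subset ha hb hcore]
    exact hinj.card_biUnion_eq_card_add_card ⟨a, ha⟩ hcore fun i hi => (hcard hi).trans hinter
  · have hunion : #(F a ∪ F b) = #(F a) + 1 := by
      rw [union_comm, ← card_sdiff_add_card, hF hb ha hab.symm, add_comm]
    rw [biUnion_eq_union_of_forall_subset_union ha hb hbound]
    exact hinj.card_eq_card_inf_add_card ⟨a, ha⟩ hbound fun i hi => by rw [hunion, hcard hi]

theorem card_inf_add_one_eq_or_card_biUnion_eq_add_one_of_pairwise_card_sdiff_eq_one [Fintype α]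
    (hF : (s : Set ι).Pairwise fun i j => #(F i \ F j) = 1) {a b : ι} (ha : a ∈ s) (hb : b ∈ s)
    (hab : a ≠ b) : #(s.inf F) + 1 = #(F a) ∨ #(s.biUnion F) = #(F a) + 1 := by
  rcases forall_inter_subset_or_forall_subset_union_of_pairwise_card_sdiff_eq_one hF ha hb hab
    with hcore | hbound
  · left
    rw [inf_eq_inter_of_forall_inter_subset ha hb hcore, ← card_sdiff_add_card_inter (F a) (F b),
      hF ha hb hab, add_comm]
  · right
    rw [biUnion_eq_union_of_forall_subset_union ha hb hbound, union_comm, ← card_sdiff_add_card,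
      hF hb ha hab.symm, add_comm]

end PairwiseCardSdiffEqOne

end Finset

section InducedP4

variable {V : Type*} {S : SimpleGraph V}

theorem isInducedP4_iff_exists_embedding {T : Finset V} :
    IsInducedP4 S T ↔ ∃ f : pathGraph 4 ↪g S, Set.range f = T := by
  constructor
  · rintro ⟨-, ⟨e⟩⟩
    refine ⟨(Embedding.induce (T : Set V)).comp e.symm.toEmbedding, ?_⟩
    ext x
    simp
  · rintro ⟨f, hf⟩
    have e : S.induce (T : Set V) ≃g pathGraph 4 := (hf ▸ f.isoInduceRange).symm
    refine ⟨?_, ⟨e⟩⟩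
    rw [← Set.ncard_coe_finset, ← Nat.card_coe_set_eq, Nat.card_congr e.toEquiv,
      Nat.card_eq_fintype_card, Fintype.card_fin]

variable [DecidableEq V]

theorem isInducedP4_of_adj {a b c d : V} (hab : S.Adj a b) (hbc : S.Adj b c) (hcd : S.Adj c d)
    (hac : ¬S.Adj a c) (had : ¬S.Adj a d) (hbd : ¬S.Adj b d) : IsInducedP4 S {a, b, c, d} := by
  have hac' : a ≠ c := by rintro rfl; exact had hcd
  have had' : a ≠ d := by rintro rfl; exact hac hcd.symm
  have hbd' : b ≠ d := by rintro rfl; exact had hab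
  have hinj : Function.Injective ![a, b, c, d] := by
    intro i j hij
    fin_cases i <;> fin_cases j <;> simp_all [eq_comm, hab.ne, hbc.ne, hcd.ne]
  have hadj (i j : Fin 4) : S.Adj (![a, b, c, d] i) (![a, b, c, d] j) ↔ (pathGraph 4).Adj i j := by
    simp only [pathGraph_adj]
    fin_cases i <;> fin_cases j <;>
      simp [hab, hbc, hcd, hab.symm, hbc.symm, hcd.symm, hac, had, hbd, mt S.adj_symm hac,
        mt S.adj_symm had, mt S.adj_symm hbd]
  refine isInducedP4_iff_exists_embedding.mpr ⟨⟨⟨_, hinj⟩, hadj _ _⟩, ?_⟩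
  ext x
  simp [eq_comm]
  tauto

theorem IsInducedP4.exists_eq_insert {T : Finset V} (hT : IsInducedP4 S T) :
    ∃ a b c d, T = {a, b, c, d} ∧ S.Adj a b ∧ S.Adj b c ∧ S.Adj c d ∧
      ¬S.Adj a c ∧ ¬S.Adj a d ∧ ¬S.Adj b d := by
  obtain ⟨f, hf⟩ := isInducedP4_iff_exists_embedding.mp hT
  refine ⟨f 0, f 1, f 2, f 3, coe_injective ?_, ?_⟩
  · rw [← hf]
    ext x
    simp [Fin.exists_fin_succ, eq_comm]
  · simp only [f.map_adj_iff, pathGraph_adj]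
    decide

end InducedP4

structure IsSplitPartition {V : Type*} [Fintype V] [DecidableEq V] (S : SimpleGraph V)
    (K I : Finset V) : Prop where
  union_eq_univ : K ∪ I = univ
  isClique : S.IsClique (K : Set V)
  isIndepSet : S.IsIndepSet (I : Set V)

namespace IsSplitPartition

variable {V : Type*} [Fintype V] [DecidableEq V] {S : SimpleGraph V} {K I : Finset V}
  {a b c d u v : V}

theorem mem_left_of_notMem_right (h : IsSplitPartition S K I) (hv : v ∉ I) : v ∈ K :=
  (mem_union.mp (h.union_eq_univ ▸ mem_univ v)).resolve_right hv

theorem not_adj (h : IsSplitPartition S K I) (hu : u ∈ I) (hv : v ∈ I) : ¬S.Adj u v := by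
  rcases eq_or_ne u v with rfl | huv
  · exact S.loopless.irrefl u
  · exact h.isIndepSet hu hv huv

theorem mem_left_of_adj (h : IsSplitPartition S K I) (hu : u ∈ I) (huv : S.Adj u v) : v ∈ K :=
  h.mem_left_of_notMem_right fun hv => h.not_adj hu hv huv

theorem mem_right_of_not_adj_of_not_adj (h : IsSplitPartition S K I) (hcd : S.Adj c d)
    (hac : ¬S.Adj a c) (had : ¬S.Adj a d) : a ∈ I := by
  by_contra ha
  have haK := h.mem_left_of_notMem_right ha
  have hc : c ∈ I := by
    by_contra hc
    exact hac (h.isClique haK (h.mem_left_of_notMem_right hc) (by rintro rfl; exact had hcd))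
  have hd : d ∈ I := by
    by_contra hd
    exact had (h.isClique haK (h.mem_left_of_notMem_right hd) (by rintro rfl; exact hac hcd.symm))
  exact h.not_adj hc hd hcd

theorem exists_adj_not_adj_of_isInducedP4 (h : IsSplitPartition S K I) {T : Finset V}
    (hT : IsInducedP4 S T) (hu : u ∈ I) (hv : v ∈ I) (huv : u ≠ v) (huT : u ∈ T) (hvT : v ∈ T) :
    ∃ p, S.Adj u p ∧ ¬S.Adj v p := by
  obtain ⟨a, b, c, d, rfl, hab, hbc, hcd, hac, had, hbd⟩ := hT.exists_eq_insert
  -- the ends of an induced `P4` lie in `I`, its inner vertices do not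
  have ha : a ∈ I := h.mem_right_of_not_adj_of_not_adj hcd hac had
  have hd : d ∈ I := h.mem_right_of_not_adj_of_not_adj hab (mt S.adj_symm had) (mt S.adj_symm hbd)
  have hends : ∀ x ∈ ({a, b, c, d} : Finset V), x ∈ I → x = a ∨ x = d := by
    intro x hx hxI
    simp only [mem_insert, mem_singleton] at hx
    rcases hx with rfl | rfl | rfl | rfl
    · exact .inl rfl
    · exact absurd hab (h.not_adj ha hxI)
    · exact absurd hcd (h.not_adj hxI hd)
    · exact .inr rfl
  rcases hends u huT hu with rfl | rfl <;> rcases hends v hvT hv with rfl | rfl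
  · exact absurd rfl huv
  · exact ⟨b, hab, mt S.adj_symm hbd⟩
  · exact ⟨c, hcd.symm, hac⟩
  · exact absurd rfl huv

theorem card_neighborFinset_sdiff_eq_one [DecidableRel S.Adj] (h : IsSplitPartition S K I)
    (hu : u ∈ I) (hv : v ∈ I) (huv : u ≠ v) (hσ : sigmaP4 S u v = 1) :
    #(S.neighborFinset u \ S.neighborFinset v) = 1 := by
  obtain ⟨hunique, ⟨T, hT, huT, hvT⟩⟩ := Nat.card_eq_one_iff_unique.mp hσ
  obtain ⟨p, hup, hvp⟩ := h.exists_adj_not_adj_of_isInducedP4 hT hu hv huv huT hvT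
  obtain ⟨q, hvq, huq⟩ := h.exists_adj_not_adj_of_isInducedP4 hT hv hu huv.symm hvT huT
  -- every `p' ∈ N(u) \ N(v)` closes an induced path `u - p' - q - v`, which must be the unique one
  have hpath (p' : V) (hup' : S.Adj u p') (hvp' : ¬S.Adj v p') :
      IsInducedP4 S {u, p', q, v} ∧ u ∈ ({u, p', q, v} : Finset V) ∧
        v ∈ ({u, p', q, v} : Finset V) := by
    have hp'q : S.Adj p' q := h.isClique (h.mem_left_of_adj hu hup') (h.mem_left_of_adj hv hvq)
      (by rintro rfl; exact huq hup')
    exact ⟨isInducedP4_of_adj hup' hp'q hvq.symm huq (h.not_adj hu hv) (mt S.adj_symm hvp'),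
      by simp, by simp⟩
  refine card_eq_one.mpr ⟨p, eq_singleton_iff_unique_mem.mpr ⟨by simp [hup, hvp], ?_⟩⟩
  intro p' hp'
  rw [mem_sdiff, mem_neighborFinset, mem_neighborFinset] at hp'
  have hT' : ({u, p', q, v} : Finset V) = {u, p, q, v} :=
    congrArg Subtype.val (hunique.allEq ⟨_, hpath p' hp'.1 hp'.2⟩ ⟨_, hpath p hup hvp⟩)
  have hp'T : p' ∈ ({u, p, q, v} : Finset V) := hT' ▸ by simp
  simp only [mem_insert, mem_singleton] at hp'T
  rcases hp'T with rfl | rfl | rfl | rfl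
  · exact absurd hp'.1 (S.loopless.irrefl _)
  · rfl
  · exact absurd hp'.1 huq
  · exact absurd hp'.1 (h.not_adj hu hv)

theorem setOf_forall_adj_eq_inf_neighborFinset [DecidableRel S.Adj] (h : IsSplitPartition S K I)
    (hI : 1 < #I) : {x | ∀ w, w ≠ x → S.Adj x w} = ↑(I.inf (fun v => S.neighborFinset v)) := by
  ext x
  simp only [Set.mem_ofPred_eq, mem_coe, mem_inf, mem_neighborFinset]
  constructor
  · intro hx u hu
    obtain ⟨w, hw, hwu⟩ := exists_mem_ne hI u
    have hxu : x ≠ u := by rintro rfl; exact h.not_adj hu hw (hx w hwu)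
    exact (hx u hxu.symm).symm
  · intro hx w hwx
    obtain ⟨u, hu⟩ := card_pos.mp (zero_lt_one.trans hI)
    by_cases hw : w ∈ I
    · exact (hx w hw).symm
    · exact h.isClique (h.mem_left_of_adj hu (hx u hu)) (h.mem_left_of_notMem_right hw) hwx.symm

end IsSplitPartition

theorem stmt16_general {V : Type*} [Fintype V] [DecidableEq V]
    (S : SimpleGraph V) [DecidableRel S.Adj] (K I : Finset V)
    (hpart : K ∪ I = Finset.univ)
    (hK : S.IsClique (K : Set V)) (hI : Sᶜ.IsClique (I : Set V))
    (hcov : I.biUnion (fun v => S.neighborFinset v) = K)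
    (hI2 : 2 ≤ I.card)
    (hsig : ∀ u ∈ I, ∀ v ∈ I, u ≠ v → sigmaP4 S u v = 1)
    (U : Set V) (hU : U = {x : V | ∀ w : V, w ≠ x → S.Adj x w}) :
    ∃ d : ℕ, (∀ v ∈ I, S.degree v = d) ∧ 1 ≤ d ∧ d ≤ K.card - 1 ∧
      (U.ncard = d - 1 ∨ U.ncard + I.card = d + 1) ∧
      K.card = I.card + U.ncard ∧
      (U.ncard = d - 1 ↔ K.card = I.card + d - 1) ∧
      (U.ncard + I.card = d + 1 ↔ K.card = d + 1) := by
  have hS : IsSplitPartition S K I := ⟨hpart, hK, (S.isClique_compl).mp hI⟩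
  have hF : (I : Set V).Pairwise fun u v => #(S.neighborFinset u \ S.neighborFinset v) = 1 :=
    fun u hu v hv huv => hS.card_neighborFinset_sdiff_eq_one hu hv huv (hsig u hu v hv huv)
  obtain ⟨a, ha, b, hb, hab⟩ := one_lt_card.mp hI2
  have hUcard : U.ncard = #(I.inf (fun v => S.neighborFinset v)) := by
    rw [hU, hS.setOf_forall_adj_eq_inf_neighborFinset hI2, Set.ncard_coe_finset]
  have hKcard : #K = #(I.inf (fun v => S.neighborFinset v)) + #I :=
    hcov ▸ card_biUnion_eq_card_inf_add_card_of_pairwise_card_sdiff_eq_one hF ha hb hab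
  have hdeg : ∀ v ∈ I, S.degree v = S.degree a := fun v hv => by
    simpa only [card_neighborFinset_eq_degree] using
      card_eq_card_of_pairwise_card_sdiff_eq_one hF hv ha
  have hpos : 1 ≤ S.degree a := by
    rw [← card_neighborFinset_eq_degree, ← hF ha hb hab]
    exact card_le_card sdiff_subset
  have hcases :=
    card_inf_add_one_eq_or_card_biUnion_eq_add_one_of_pairwise_card_sdiff_eq_one hF ha hb hab
  rw [hcov, card_neighborFinset_eq_degree] at hcases
  refine ⟨S.degree a, hdeg, hpos, ?_, ?_, ?_, ?_, ?_⟩ <;> omega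

theorem stmt16 {V : Type*} [Fintype V] [DecidableEq V] [Nonempty V]
    (S : SimpleGraph V) [DecidableRel S.Adj] (K I : Finset V)
    (hpart : K ∪ I = Finset.univ) (hdisj : Disjoint K I)
    (hK : S.IsClique (K : Set V)) (hI : Sᶜ.IsClique (I : Set V))
    (hcov : I.biUnion (fun v => S.neighborFinset v) = K)
    (hbK : K.card = S.cliqueNum) (hbI : I.card = Sᶜ.cliqueNum)
    (hI2 : 2 ≤ I.card)
    (hsig : ∀ u ∈ I, ∀ v ∈ I, u ≠ v → sigmaP4 S u v = 1)
    (U : Set V) (hU : U = {x : V | ∀ w : V, w ≠ x → S.Adj x w}) :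
    ∃ d : ℕ, (∀ v ∈ I, S.degree v = d) ∧ 1 ≤ d ∧ d ≤ K.card - 1 ∧
      (U.ncard = d - 1 ∨ U.ncard + I.card = d + 1) ∧
      K.card = I.card + U.ncard ∧
      (U.ncard = d - 1 ↔ K.card = I.card + d - 1) ∧
      (U.ncard + I.card = d + 1 ↔ K.card = d + 1) :=
  stmt16_general S K I hpart hK hI hcov hI2 hsig U hU
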